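/- arXiv:1304.6369 — 3 statements merged into one kernel-verified Lean document; each statement's English description precedes it below -/
import Mathlib

section
/- The functions G_1(Z) = R_1² - ‖(1+μ)X + μE‖² and G_2(Z) = R_2² - ‖(1+μ)X - E‖² are first integrals (Casimir functions) of the extended system: their gradients are annihilated by the structure matrix J(Z), i.e. J(Z)·∇G_i(Z) = 0 for i = 1,2, whenever R_1, R_2 ≠ 0 and G_1(Z) = G_2(Z) = 0. -/
open Matrix

/-- Coordinates of a point of the extended phase space ℝ⁶:
`Z = (X₁, X₂, P₁, P₂, R₁, R₂)`. -/
noncomputable def toE6 (Z : Fin 6 → ℝ) : EuclideanSpace ℝ (Fin 6) :=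
  (WithLp.equiv 2 (Fin 6 → ℝ)).symm Z

/-- The Casimir `G₁(Z) = R₁² - ‖(1+μ)X + μE‖²`. -/
noncomputable def G1fun (μ : ℝ) (W : EuclideanSpace ℝ (Fin 6)) : ℝ :=
  (WithLp.equiv 2 (Fin 6 → ℝ) W 4) ^ 2 -
    (((1 + μ) * WithLp.equiv 2 (Fin 6 → ℝ) W 0 + μ) ^ 2 +
      ((1 + μ) * WithLp.equiv 2 (Fin 6 → ℝ) W 1) ^ 2)

/-- The Casimir `G₂(Z) = R₂² - ‖(1+μ)X - E‖²`. -/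
noncomputable def G2fun (μ : ℝ) (W : EuclideanSpace ℝ (Fin 6)) : ℝ :=
  (WithLp.equiv 2 (Fin 6 → ℝ) W 5) ^ 2 -
    (((1 + μ) * WithLp.equiv 2 (Fin 6 → ℝ) W 0 - 1) ^ 2 +
      ((1 + μ) * WithLp.equiv 2 (Fin 6 → ℝ) W 1) ^ 2)

/-- The Poisson structure matrix `J(Z) = [[0, Id, 0],[-Id, 0, -A],[0, Aᵀ, 0]]`
with `A = (1+μ)[R⃗₁/R₁, R⃗₂/R₂]`. -/
noncomputable def Jstruct (μ : ℝ) (Z : Fin 6 → ℝ) : Matrix (Fin 6) (Fin 6) ℝ :=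
  let R1x := (1 + μ) * Z 0 + μ
  let R2x := (1 + μ) * Z 0 - 1
  let Ry := (1 + μ) * Z 1
  let A00 := (1 + μ) * R1x / Z 4
  let A10 := (1 + μ) * Ry / Z 4
  let A01 := (1 + μ) * R2x / Z 5
  let A11 := (1 + μ) * Ry / Z 5
  !![0, 0, 1, 0, 0, 0;
     0, 0, 0, 1, 0, 0;
     -1, 0, 0, 0, -A00, -A01;
     0, -1, 0, 0, -A10, -A11;
     0, 0, A00, A10, 0, 0;
     0, 0, A01, A11, 0, 0]

/-! Both gradients have vanishing momentum part: `∇G_i = (-2(1+μ)R⃗_i, 0, 2R_i e_i)`. Hence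
`J ∇G_i = (0, 2(1+μ)R⃗_i - 2R_i A e_i, 0)`, which vanishes because the `i`-th column of `A` is
`(1+μ)R⃗_i / R_i`. -/

theorem EuclideanSpace.ofLp_gradient_of_hasFDerivAt {ι : Type*} [Fintype ι] [DecidableEq ι]
    {f : EuclideanSpace ℝ ι → ℝ} {f' : StrongDual ℝ (EuclideanSpace ℝ ι)}
    {x : EuclideanSpace ℝ ι} (h : HasFDerivAt f f' x) :
    (gradient f x).ofLp = fun i => f' (EuclideanSpace.single i 1) := by
  funext i
  rw [h.hasGradientAt.gradient, ← InnerProductSpace.toDual_symm_apply,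
    EuclideanSpace.inner_single_right]
  simp

def radialCasimir (a b : ℝ) (k : Fin 6) (W : EuclideanSpace ℝ (Fin 6)) : ℝ :=
  W k ^ 2 - ((a * W 0 + b) ^ 2 + (a * W 1) ^ 2)

theorem G1fun_eq_radialCasimir (μ : ℝ) : G1fun μ = radialCasimir (1 + μ) μ 4 := rfl

theorem G2fun_eq_radialCasimir (μ : ℝ) : G2fun μ = radialCasimir (1 + μ) (-1) 5 := by
  funext W
  simp only [G2fun, radialCasimir, WithLp.equiv_apply]
  ring

open EuclideanSpace in
theorem hasFDerivAt_radialCasimir (a b : ℝ) (k : Fin 6) (W : EuclideanSpace ℝ (Fin 6)) :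
    HasFDerivAt (radialCasimir a b k)
      ((2 * W k) • proj (𝕜 := ℝ) k - (2 * a * (a * W 0 + b)) • proj (𝕜 := ℝ) 0
        - (2 * a * (a * W 1)) • proj (𝕜 := ℝ) 1) W := by
  have hX₁ := ((proj (𝕜 := ℝ) 0).hasFDerivAt (x := W)).const_mul a |>.add_const b
  have hX₂ := ((proj (𝕜 := ℝ) 1).hasFDerivAt (x := W)).const_mul a
  have hR := (proj (𝕜 := ℝ) k).hasFDerivAt (x := W)
  refine ((hR.pow 2).sub ((hX₁.pow 2).add (hX₂.pow 2))).congr_fderiv ?_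
  ext v
  simp
  ring

theorem ofLp_gradient_radialCasimir (a b : ℝ) (k : Fin 6) (W : EuclideanSpace ℝ (Fin 6)) :
    (gradient (radialCasimir a b k) W).ofLp =
      Pi.single k (2 * W k) - Pi.single 0 (2 * a * (a * W 0 + b))
        - Pi.single 1 (2 * a * (a * W 1)) := by
  rw [EuclideanSpace.ofLp_gradient_of_hasFDerivAt (hasFDerivAt_radialCasimir a b k W)]
  funext i
  simp [Pi.single_apply, eq_comm]

theorem casimir_gradients_annihilated_general (μ : ℝ) (Z : Fin 6 → ℝ)
    (hR1 : Z 4 ≠ 0) (hR2 : Z 5 ≠ 0) :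
    Jstruct μ Z *ᵥ (WithLp.equiv 2 (Fin 6 → ℝ) (gradient (G1fun μ) (toE6 Z))) = 0
    ∧ Jstruct μ Z *ᵥ (WithLp.equiv 2 (Fin 6 → ℝ) (gradient (G2fun μ) (toE6 Z))) = 0 := by
  rw [G1fun_eq_radialCasimir, G2fun_eq_radialCasimir, WithLp.equiv_apply, WithLp.equiv_apply,
    ofLp_gradient_radialCasimir, ofLp_gradient_radialCasimir]
  constructor <;> funext i <;> fin_cases i <;>
    simp [Jstruct, mulVec, dotProduct, Fin.sum_univ_six, toE6, Pi.single_apply] <;>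
    field_simp <;> ring

/-- `G₁` and `G₂` are Casimir functions of the extended Poisson structure:
their gradients are annihilated by the structure matrix `J(Z)`. -/
theorem casimir_gradients_annihilated (μ : ℝ) (hμ : 0 < μ) (Z : Fin 6 → ℝ)
    (hR1 : Z 4 ≠ 0) (hR2 : Z 5 ≠ 0)
    (hG1 : G1fun μ (toE6 Z) = 0) (hG2 : G2fun μ (toE6 Z) = 0) :
    Jstruct μ Z *ᵥ (WithLp.equiv 2 (Fin 6 → ℝ) (gradient (G1fun μ) (toE6 Z))) = 0
    ∧ Jstruct μ Z *ᵥ (WithLp.equiv 2 (Fin 6 → ℝ) (gradient (G2fun μ) (toE6 Z))) = 0 :=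
  casimir_gradients_annihilated_general μ Z hR1 hR2
end

section
/- The 6×6 matrix J(Z) = [[0, Id_2, 0],[-Id_2, 0, -A],[0, Aᵀ, 0]] has rank 4 whenever the 2×2 matrix A is invertible. -/
/-!
Ordering the six coordinates in three blocks of two, `J` is a block matrix whose top-left
4×4 corner is minus the standard symplectic form `J₂ = [[0, -1], [1, 0]]`, which is invertible
with inverse `J₂`, and whose Schur complement `0 - [0, Aᵀ] J₂ [0; -A]` vanishes. The LDU
decomposition through the Schur complement then shows that the rank of `J` equals that of the
corner, namely 4.
-/

open Matrix

namespace Matrix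

section SchurComplement

variable {K : Type*} [Field K] {m n : Type*} [Fintype m] [Fintype n] [DecidableEq m]
  [DecidableEq n]

theorem rank_fromBlocks_one_zero_zero_zero :
    (fromBlocks (1 : Matrix m m K) 0 0 (0 : Matrix n n K)).rank = Fintype.card m := by
  classical
  rw [← diagonal_one, ← diagonal_zero, fromBlocks_diagonal, rank_diagonal]
  simp [Fintype.card_subtype, Finset.card_filter, Fintype.sum_sum_type]

theorem rank_fromBlocks_zero_zero_zero (S : Matrix m m K) [Invertible S] :
    (fromBlocks S 0 0 (0 : Matrix n n K)).rank = Fintype.card m := by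
  have hfactor :
      fromBlocks S 0 0 (0 : Matrix n n K) = fromBlocks S 0 0 1 * fromBlocks 1 0 0 0 := by
    simp [fromBlocks_multiply]
  have hunit : IsUnit (fromBlocks S 0 0 (1 : Matrix n n K)).det := by
    simpa [det_fromBlocks_zero₂₁] using isUnit_det_of_invertible S
  rw [hfactor, rank_mul_eq_right_of_isUnit_det _ _ hunit, rank_fromBlocks_one_zero_zero_zero]

theorem rank_fromBlocks_of_schur_eq_zero (S : Matrix m m K) [Invertible S] (B : Matrix m n K)
    (C : Matrix n m K) : (fromBlocks S B C (C * ⅟S * B)).rank = Fintype.card m := by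
  rw [fromBlocks_eq_of_invertible₁₁, sub_self,
    rank_mul_eq_left_of_isUnit_det _ _ (by simp),
    rank_mul_eq_right_of_isUnit_det _ _ (by simp),
    rank_fromBlocks_zero_zero_zero]

end SchurComplement

section JBlock

variable {n : Type*} [Fintype n] [DecidableEq n]

/-- `[[0, 1, 0], [-1, 0, -A], [0, Aᵀ, 0]]`, whose top-left 2×2 block of blocks is `-J`. -/
def jBlock {R : Type*} [CommRing R] (A : Matrix n n R) :
    Matrix ((n ⊕ n) ⊕ n) ((n ⊕ n) ⊕ n) R :=
  fromBlocks (-J n R) (fromRows 0 (-A)) (fromCols 0 Aᵀ) 0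

theorem fromCols_mul_J_mul_fromRows {R : Type*} [CommRing R] (A : Matrix n n R) :
    fromCols (0 : Matrix n n R) Aᵀ * J n R * fromRows (0 : Matrix n n R) (-A) = 0 := by
  simp [J, fromCols_mul_fromBlocks, fromCols_mul_fromRows]

theorem rank_jBlock {K : Type*} [Field K] (A : Matrix n n K) :
    (jBlock A).rank = 2 * Fintype.card n := by
  let : Invertible (-J n K) := invertibleOfRightInverse _ (J n K) (by simp [J_squared])
  have hschur := rank_fromBlocks_of_schur_eq_zero (-J n K) (fromRows 0 (-A)) (fromCols 0 Aᵀ)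
  rwa [show ⅟(-J n K) = J n K from rfl, fromCols_mul_J_mul_fromRows, Fintype.card_sum,
    ← two_mul] at hschur

end JBlock

end Matrix

def finSixEquivSumSum : (Fin 2 ⊕ Fin 2) ⊕ Fin 2 ≃ Fin 6 :=
  (finSumFinEquiv.sumCongr (Equiv.refl _)).trans finSumFinEquiv

theorem Jblock_rank_four_general (A : Matrix (Fin 2) (Fin 2) ℝ) :
    (!![0, 0, 1, 0, 0, 0;
        0, 0, 0, 1, 0, 0;
        -1, 0, 0, 0, -(A 0 0), -(A 0 1);
        0, -1, 0, 0, -(A 1 0), -(A 1 1);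
        0, 0, A 0 0, A 1 0, 0, 0;
        0, 0, A 0 1, A 1 1, 0, 0] : Matrix (Fin 6) (Fin 6) ℝ).rank = 4 := by
  calc _ = (jBlock A).rank := by
        rw [← rank_submatrix _ finSixEquivSumSum finSixEquivSumSum]
        congr 1
        -- `simp` leaves `finSumFinEquiv` applied to numerals, which `rfl` evaluates.
        ext (⟨i | i⟩ | i) (⟨j | j⟩ | j) <;> fin_cases i <;> fin_cases j <;>
          simp [jBlock, J, finSixEquivSumSum] <;> rfl
    _ = 4 := by simp [rank_jBlock]

/-- The 6×6 block matrix `J = [[0, Id, 0],[-Id, 0, -A],[0, Aᵀ, 0]]` has rank 4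
whenever the 2×2 matrix `A` is invertible. -/
theorem Jblock_rank_four (A : Matrix (Fin 2) (Fin 2) ℝ) (hA : IsUnit A) :
    (!![0, 0, 1, 0, 0, 0;
        0, 0, 0, 1, 0, 0;
        -1, 0, 0, 0, -(A 0 0), -(A 0 1);
        0, -1, 0, 0, -(A 1 0), -(A 1 1);
        0, 0, A 0 0, A 1 0, 0, 0;
        0, 0, A 0 1, A 1 1, 0, 0] : Matrix (Fin 6) (Fin 6) ℝ).rank = 4 :=
  Jblock_rank_four_general A
end

section
/- The system of polynomial equations in (β², μ, e): { 1 + β⁴(1+μ) + 2β²(μ-1)(-1 - 2eμ + μ²) + μ(-1 - 2e(μ-1)(1+μ²) + μ(-1 + μ(-1 + (μ-1)μ))) = 0 , μ(1 + 3β² + (μ-1)μ)(μ²-1) + e(β⁶ + μ²(-1 + μ - μ²) + β⁴(2 + μ(2μ-3)) + β²(1 + μ(-1 + μ(-1 + (μ-1)μ)))) = 0 } with μ > 0, β² > 0 (β ≠ 0), e ∈ ℝ has exactly the solutions (β² = -1 + μ - μ², e = (1+μ)/(1-μ)) and (β² = 1, μ = 1) — and in particular the first family forces β² = -1 + μ -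 μ² ≤ 0 for real μ, so it admits no solution with β² > 0 and μ > 0. -/
/-!
Both conditions are affine in `e`, so `e` can be eliminated: the resultant factors as
`(b + 1 - μ + μ²)(1 + μ)(b + 1)(b + μ²)((b + 1 - 3μ + μ²)² + 4μ(1 - μ)²)`.
For `b, μ > 0` the first four factors are positive, and the last, a sum of squares, vanishes
only at `μ = 1`, `b = 1`. The family `b = -1 + μ - μ²` is empty there because
`-1 + μ - μ² = -((μ - 1/2)² + 3/4)`.
-/

namespace LogCoefficient

/-- Real part of the logarithm coefficient `g₂`, with `b = β²`. -/
def re (b μ e : ℝ) : ℝ :=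
  1 + b ^ 2 * (1 + μ) + 2 * b * (-1 + μ) * (-1 - 2 * e * μ + μ ^ 2)
    + μ * (-1 - 2 * e * (-1 + μ) * (1 + μ ^ 2) + μ * (-1 + μ * (-1 + (-1 + μ) * μ)))

/-- Imaginary part of the logarithm coefficient `g₂`, with `b = β²`. -/
def im (b μ e : ℝ) : ℝ :=
  μ * (1 + 3 * b + (-1 + μ) * μ) * (-1 + μ ^ 2)
    + e * (b ^ 3 + μ ^ 2 * (-1 + μ - μ ^ 2) + b ^ 2 * (2 + μ * (-3 + 2 * μ))
      + b * (1 + μ * (-1 + μ * (-1 + (-1 + μ) * μ))))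

theorem resultant_eq (b μ e : ℝ) :
    (b ^ 3 + μ ^ 2 * (-1 + μ - μ ^ 2) + b ^ 2 * (2 + μ * (-3 + 2 * μ))
        + b * (1 + μ * (-1 + μ * (-1 + (-1 + μ) * μ)))) * re b μ e
      + 2 * μ * (μ - 1) * (2 * b + 1 + μ ^ 2) * im b μ e
      = (b + 1 - μ + μ ^ 2) * (1 + μ) * (b + 1) * (b + μ ^ 2)
        * ((b + 1 - 3 * μ + μ ^ 2) ^ 2 + 4 * μ * (1 - μ) ^ 2) := by
  unfold re im
  ring

theorem neg_one_add_sub_sq_neg (μ : ℝ) : -1 + μ - μ ^ 2 < 0 := by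
  nlinarith [sq_nonneg (2 * μ - 1)]

theorem eq_one_of_sq_add_mul_sq_eq_zero {b μ : ℝ} (hμ : 0 < μ)
    (h : (b + 1 - 3 * μ + μ ^ 2) ^ 2 + 4 * μ * (1 - μ) ^ 2 = 0) : b = 1 ∧ μ = 1 := by
  have hsq : (b + 1 - 3 * μ + μ ^ 2) ^ 2 = 0 ∧ 4 * μ * (1 - μ) ^ 2 = 0 :=
    (add_eq_zero_iff_of_nonneg (sq_nonneg _) (by positivity)).mp h
  have hμ1 : μ = 1 := by
    have : (1 - μ) ^ 2 = 0 := by simpa [hμ.ne'] using hsq.2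
    linarith [pow_eq_zero_iff two_ne_zero |>.mp this]
  subst hμ1
  have : b - 1 = 0 := pow_eq_zero_iff two_ne_zero |>.mp (by linarith [hsq.1])
  exact ⟨by linarith, rfl⟩

theorem eq_one_of_re_eq_zero_of_im_eq_zero {b μ e : ℝ} (hb : 0 < b) (hμ : 0 < μ)
    (hre : re b μ e = 0) (him : im b μ e = 0) : b = 1 ∧ μ = 1 := by
  have hprod := resultant_eq b μ e
  rw [hre, him, mul_zero, mul_zero, add_zero, eq_comm] at hprod
  have hfactors : 0 < (b + 1 - μ + μ ^ 2) * (1 + μ) * (b + 1) * (b + μ ^ 2) := by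
    have := neg_one_add_sub_sq_neg μ
    have : 0 < b + 1 - μ + μ ^ 2 := by linarith
    positivity
  exact eq_one_of_sq_add_mul_sq_eq_zero hμ ((mul_eq_zero.mp hprod).resolve_left hfactors.ne')

end LogCoefficient

open LogCoefficient in
/-- The system of polynomial conditions arising from the logarithm coefficient
`g₂` (real and imaginary part), in the variables `b = β²`, `μ`, `e` with
`b > 0`, `μ > 0`, has exactly the solutions
`(b = -1 + μ - μ², e = (1+μ)/(1-μ))` and `(b = 1, μ = 1)`; in particular the
first family forces `b = -1 + μ - μ² ≤ 0`, so it admits no solution with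
`b > 0` and `μ > 0`. -/
theorem log_coefficient_vanishing_solutions :
    (∀ b μ e : ℝ, 0 < b → 0 < μ →
      ((1 + b ^ 2 * (1 + μ) + 2 * b * (-1 + μ) * (-1 - 2 * e * μ + μ ^ 2)
          + μ * (-1 - 2 * e * (-1 + μ) * (1 + μ ^ 2)
            + μ * (-1 + μ * (-1 + (-1 + μ) * μ))) = 0
        ∧ μ * (1 + 3 * b + (-1 + μ) * μ) * (-1 + μ ^ 2)
          + e * (b ^ 3 + μ ^ 2 * (-1 + μ - μ ^ 2) + b ^ 2 * (2 + μ * (-3 + 2 * μ))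
            + b * (1 + μ * (-1 + μ * (-1 + (-1 + μ) * μ)))) = 0)
      ↔ ((b = -1 + μ - μ ^ 2 ∧ e = (1 + μ) / (1 - μ)) ∨ (b = 1 ∧ μ = 1))))
    ∧ ∀ μ : ℝ, -1 + μ - μ ^ 2 ≤ 0 := by
  refine ⟨fun b μ e hb hμ => ⟨fun ⟨hre, him⟩ => ?_, ?_⟩, fun μ => (neg_one_add_sub_sq_neg μ).le⟩
  · exact Or.inr (eq_one_of_re_eq_zero_of_im_eq_zero hb hμ hre him)
  · rintro (⟨rfl, -⟩ | ⟨rfl, rfl⟩)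
    · exact absurd hb (neg_one_add_sub_sq_neg μ).not_gt
    · constructor <;> ring
end
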